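/- Fix d > 1 and 0 < λ < ∞, and let f_λ denote the unique fixed point of the truncated cavity operator T, extended to ℝ by 1 on (-∞,-λ] and 0 on (λ,∞). Then for all x ≥ 0, f_λ(-x) · ln(1 / f_λ(-x)) ≤ exp(-x^d / e), where the left-hand side is interpreted as 0 when f_λ(-x) ∈ {0, 1}. -/

import Mathlib

/-!
Write `a = f(0)`. Since `f` is non-increasing, on each piece of the cavity integral `f` is bounded
below by its value at the right endpoint. For `0 ≤ s ≤ λ` this gives `f(s) ≤ a·exp(-a sᵈ)`;
integrating this bound shows `d∫₀^λ yᵈ⁻¹ f ≤ 1`, i.e. `a ≥ 1/e`. For `0 ≤ x ≤ y ≤ λ`, splitting at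
`-x` and `0` and using superadditivity of `tᵈ` gives `f(y) ≤ exp(-a xᵈ)·exp(-f(-x)(y-x)ᵈ)`. As
`log(1/f(-x)) = d∫ₓ^λ (y-x)ᵈ⁻¹ f(y) dy`, integrating this bound yields
`f(-x)·log(1/f(-x)) ≤ exp(-a xᵈ) ≤ exp(-xᵈ/e)`.
-/

open MeasureTheory Set

/-- The truncated cavity operator `T`. -/
noncomputable def T (d lam : ℝ) (f : ℝ → ℝ) : ℝ → ℝ :=
  fun x => Real.exp (-(d * ∫ y in (-x)..lam, (x + y) ^ (d - 1) * f y))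

/-- `f` is the fixed point of the truncated cavity operator on `[-λ, λ]`
(non-increasing and `[0,1]`-valued there), extended to `ℝ` by `1` on `(-∞, -λ]`
and `0` on `(λ, ∞)`. -/
def ExtFixedPoint (d lam : ℝ) (f : ℝ → ℝ) : Prop :=
  AntitoneOn f (Icc (-lam) lam) ∧
  (∀ x ∈ Icc (-lam) lam, f x ∈ Icc (0 : ℝ) 1) ∧
  (∀ x ≤ -lam, f x = 1) ∧ (∀ x > lam, f x = 0) ∧
  (∀ x ∈ Icc (-lam) lam, T d lam f x = f x)

open Real

section RpowIntegrals

variable {p : ℝ}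

lemma integral_add_rpow_sub_one (hp : 1 ≤ p) (c a b : ℝ) :
    ∫ z in a..b, (c + z) ^ (p - 1) = ((c + b) ^ p - (c + a) ^ p) / p := by
  rw [intervalIntegral.integral_comp_add_left (fun z => z ^ (p - 1)),
    integral_rpow (Or.inl (by linarith)), sub_add_cancel]

lemma integral_rpow_sub_one_mul_exp_neg (hp : 1 ≤ p) {w : ℝ} (hw : w ≠ 0) (b : ℝ) :
    ∫ t in 0..b, t ^ (p - 1) * exp (-(w * t ^ p)) = (1 - exp (-(w * b ^ p))) / (p * w) := by
  have hp0 : p ≠ 0 := (zero_lt_one.trans_le hp).ne'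
  have hderiv : ∀ t ∈ uIcc 0 b, HasDerivAt (fun t => -exp (-(w * t ^ p)) / (p * w))
      (t ^ (p - 1) * exp (-(w * t ^ p))) t := fun t _ => by
    have h := ((((hasDerivAt_id' t).rpow_const (Or.inr hp)).const_mul w).neg.exp.neg.div_const
      (p * w))
    refine h.congr_deriv ?_
    simp only [Pi.neg_apply]
    field_simp
  have hcont : Continuous fun t : ℝ => t ^ (p - 1) * exp (-(w * t ^ p)) :=
    (continuous_rpow_const (by linarith)).mul
      ((continuous_const.mul (continuous_rpow_const (by linarith))).neg.rexp)
  rw [intervalIntegral.integral_eq_sub_of_hasDerivAt hderiv (hcont.intervalIntegrable _ _),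
    zero_rpow hp0, mul_zero, neg_zero, exp_zero]
  ring

lemma mul_sub_rpow_le_integral (hp : 1 ≤ p) {f : ℝ → ℝ} {m c a b : ℝ} (hab : a ≤ b)
    (hca : 0 ≤ c + a) (hf : IntervalIntegrable f volume a b) (hm : ∀ z ∈ Icc a b, m ≤ f z) :
    m * ((c + b) ^ p - (c + a) ^ p) ≤ p * ∫ z in a..b, (c + z) ^ (p - 1) * f z := by
  have hp0 : 0 < p := zero_lt_one.trans_le hp
  have hcont : Continuous fun z => (c + z) ^ (p - 1) :=
    (continuous_rpow_const (by linarith)).comp (continuous_const_add c)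
  calc m * ((c + b) ^ p - (c + a) ^ p) = p * ∫ z in a..b, (c + z) ^ (p - 1) * m := by
        rw [intervalIntegral.integral_mul_const, integral_add_rpow_sub_one hp]
        field_simp
    _ ≤ p * ∫ z in a..b, (c + z) ^ (p - 1) * f z := by
        gcongr
        exact intervalIntegral.integral_mono_on hab
          ((hcont.mul continuous_const).intervalIntegrable _ _)
          (hf.continuousOn_mul hcont.continuousOn) fun z hz =>
            mul_le_mul_of_nonneg_left (hm z hz) (rpow_nonneg (by linarith [hz.1]) _)

lemma integral_rpow_sub_one_mul_le_div (hp : 1 ≤ p) {f : ℝ → ℝ} {C w x l : ℝ} (hC : 0 ≤ C)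
    (hw : 0 < w) (hxl : x ≤ l) (hf : IntervalIntegrable f volume x l)
    (hbound : ∀ y ∈ Icc x l, f y ≤ C * exp (-(w * (y - x) ^ p))) :
    p * ∫ y in x..l, (y - x) ^ (p - 1) * f y ≤ C / w := by
  have hp0 : 0 < p := zero_lt_one.trans_le hp
  have hcont : Continuous fun y => (y - x) ^ (p - 1) :=
    (continuous_rpow_const (by linarith)).comp (continuous_sub_right x)
  have hcont' : Continuous fun y => (y - x) ^ (p - 1) * (C * exp (-(w * (y - x) ^ p))) :=
    hcont.mul (continuous_const.mul (continuous_const.mul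
      ((continuous_rpow_const hp0.le).comp (continuous_sub_right x))).neg.rexp)
  have hint : ∫ y in x..l, (y - x) ^ (p - 1) * (C * exp (-(w * (y - x) ^ p)))
      = C * ((1 - exp (-(w * (l - x) ^ p))) / (p * w)) := by
    simp_rw [mul_left_comm _ C]
    rw [intervalIntegral.integral_const_mul,
      intervalIntegral.integral_comp_sub_right (fun t => t ^ (p - 1) * exp (-(w * t ^ p))),
      sub_self, integral_rpow_sub_one_mul_exp_neg hp hw.ne']
  calc p * ∫ y in x..l, (y - x) ^ (p - 1) * f y
      ≤ p * ∫ y in x..l, (y - x) ^ (p - 1) * (C * exp (-(w * (y - x) ^ p))) := by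
        gcongr
        exact intervalIntegral.integral_mono_on hxl (hf.continuousOn_mul hcont.continuousOn)
          (hcont'.intervalIntegrable _ _) fun y hy =>
            mul_le_mul_of_nonneg_left (hbound y hy) (rpow_nonneg (by linarith [hy.1]) _)
    _ = C * (1 - exp (-(w * (l - x) ^ p))) / w := by
        rw [hint]
        field_simp
    _ ≤ C / w := by
        gcongr
        exact mul_le_of_le_one_right hC (by linarith [exp_pos (-(w * (l - x) ^ p))])

end RpowIntegrals

lemma cavity_integral_lower_bound {p : ℝ} (hp : 1 ≤ p) {f : ℝ → ℝ} (hf : Antitone f)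
    (hf0 : ∀ z, 0 ≤ f z) {x y l : ℝ} (hx : 0 ≤ x) (hxy : x ≤ y) (hl : 0 ≤ l) :
    f (-x) * (y - x) ^ p + f 0 * (y ^ p - (y - x) ^ p) + p * ∫ z in 0..l, z ^ (p - 1) * f z
      ≤ p * ∫ z in (-y)..l, (y + z) ^ (p - 1) * f z := by
  have hp0 : 0 < p := zero_lt_one.trans_le hp
  have hI : ∀ c a b, IntervalIntegrable (fun z => (c + z) ^ (p - 1) * f z) volume a b :=
    fun c a b => hf.intervalIntegrable.continuousOn_mul
      ((continuous_rpow_const (by linarith)).comp (continuous_const_add c)).continuousOn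
  have hleft : f (-x) * (y - x) ^ p ≤ p * ∫ z in (-y)..(-x), (y + z) ^ (p - 1) * f z := by
    have h := mul_sub_rpow_le_integral hp (c := y) (neg_le_neg hxy) (by simp)
      hf.intervalIntegrable fun z hz => hf hz.2
    rwa [add_neg_cancel, zero_rpow hp0.ne', sub_zero, ← sub_eq_add_neg] at h
  have hmid : f 0 * (y ^ p - (y - x) ^ p) ≤ p * ∫ z in (-x)..0, (y + z) ^ (p - 1) * f z := by
    have h := mul_sub_rpow_le_integral hp (c := y) (neg_nonpos.2 hx) (by linarith)
      hf.intervalIntegrable fun z hz => hf hz.2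
    rwa [add_zero, ← sub_eq_add_neg] at h
  have hright :
      p * ∫ z in 0..l, z ^ (p - 1) * f z ≤ p * ∫ z in 0..l, (y + z) ^ (p - 1) * f z := by
    gcongr
    exact intervalIntegral.integral_mono_on hl (by simpa using hI 0 0 l) (hI y 0 l)
      fun z hz => mul_le_mul_of_nonneg_right
        (rpow_le_rpow hz.1 (by linarith) (by linarith)) (hf0 z)
  rw [← intervalIntegral.integral_add_adjacent_intervals (hI y (-y) (-x)) (hI y (-x) l),
    ← intervalIntegral.integral_add_adjacent_intervals (hI y (-x) 0) (hI y 0 l)]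
  linarith

namespace ExtFixedPoint

variable {d lam : ℝ} {f : ℝ → ℝ}

theorem mem_Icc (hf : ExtFixedPoint d lam f) (y : ℝ) : f y ∈ Icc (0 : ℝ) 1 := by
  obtain ⟨-, hrange, hleft, hright, -⟩ := hf
  rcases le_or_gt y (-lam) with hy | hy
  · simp [hleft y hy]
  rcases le_or_gt y lam with hy' | hy'
  · exact hrange y ⟨hy.le, hy'⟩
  · simp [hright y hy']

theorem antitone (hf : ExtFixedPoint d lam f) : Antitone f := by
  intro u v huv
  have h01 := hf.mem_Icc
  obtain ⟨hmono, -, hleft, hright, -⟩ := hf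
  rcases le_or_gt v (-lam) with hv | hv
  · rw [hleft v hv, hleft u (huv.trans hv)]
  rcases le_or_gt u (-lam) with hu | hu
  · rw [hleft u hu]; exact (h01 v).2
  rcases le_or_gt v lam with hv' | hv'
  · exact hmono ⟨hu.le, huv.trans hv'⟩ ⟨hv.le, hv'⟩ huv
  · rw [hright v hv']; exact (h01 u).1

theorem eq_exp (hf : ExtFixedPoint d lam f) {t : ℝ} (ht : t ∈ Icc (-lam) lam) :
    f t = exp (-(d * ∫ y in (-t)..lam, (t + y) ^ (d - 1) * f y)) :=
  (hf.2.2.2.2 t ht).symm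

theorem pos (hf : ExtFixedPoint d lam f) {t : ℝ} (ht : t ∈ Icc (-lam) lam) : 0 < f t := by
  rw [hf.eq_exp ht]
  exact exp_pos _

theorem eq_exp_zero (hf : ExtFixedPoint d lam f) (hl : 0 ≤ lam) :
    f 0 = exp (-(d * ∫ y in 0..lam, y ^ (d - 1) * f y)) := by
  simpa using hf.eq_exp ⟨by linarith, hl⟩

theorem le_mul_exp (hf : ExtFixedPoint d lam f) (hd : 1 ≤ d) {s : ℝ} (hs : 0 ≤ s)
    (hsl : s ≤ lam) : f s ≤ f 0 * exp (-(f 0 * s ^ d)) := by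
  have h := cavity_integral_lower_bound hd hf.antitone (fun z => (hf.mem_Icc z).1) hs le_rfl
    (hs.trans hsl)
  rw [sub_self, zero_rpow (by linarith), sub_zero, mul_zero, zero_add] at h
  calc f s = exp (-(d * ∫ y in (-s)..lam, (s + y) ^ (d - 1) * f y)) :=
        hf.eq_exp ⟨by linarith, hsl⟩
    _ ≤ exp (-(f 0 * s ^ d + d * ∫ y in 0..lam, y ^ (d - 1) * f y)) := by gcongr
    _ = f 0 * exp (-(f 0 * s ^ d)) := by
        rw [hf.eq_exp_zero (hs.trans hsl), ← exp_add]
        ring_nf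

theorem exp_neg_one_le (hf : ExtFixedPoint d lam f) (hd : 1 ≤ d) (hl : 0 ≤ lam) :
    exp (-1) ≤ f 0 := by
  have ha := hf.pos (t := 0) ⟨by linarith, hl⟩
  have h := integral_rpow_sub_one_mul_le_div hd ha.le ha hl hf.antitone.intervalIntegrable
    fun y hy => by simpa using hf.le_mul_exp hd hy.1 hy.2
  rw [div_self ha.ne'] at h
  simp only [sub_zero] at h
  rw [hf.eq_exp_zero hl]
  gcongr

theorem le_exp_mul_exp (hf : ExtFixedPoint d lam f) (hd : 1 ≤ d) {x y : ℝ} (hx : 0 ≤ x)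
    (hxy : x ≤ y) (hyl : y ≤ lam) :
    f y ≤ exp (-(f 0 * x ^ d)) * exp (-(f (-x) * (y - x) ^ d)) := by
  have hf0 : ∀ z, 0 ≤ f z := fun z => (hf.mem_Icc z).1
  have h := cavity_integral_lower_bound hd hf.antitone hf0 hx hxy (hx.trans (hxy.trans hyl))
  have hsuper : x ^ d ≤ y ^ d - (y - x) ^ d := by
    have := add_rpow_le_rpow_add hx (sub_nonneg.2 hxy) hd
    rw [add_sub_cancel] at this
    linarith
  have hF0 : 0 ≤ d * ∫ z in 0..lam, z ^ (d - 1) * f z :=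
    mul_nonneg (by linarith) (intervalIntegral.integral_nonneg (by linarith) fun z hz =>
      mul_nonneg (rpow_nonneg hz.1 _) (hf0 z))
  have hmid : f 0 * x ^ d ≤ f 0 * (y ^ d - (y - x) ^ d) := by gcongr; exact hf0 0
  calc f y = exp (-(d * ∫ z in (-y)..lam, (y + z) ^ (d - 1) * f z)) :=
        hf.eq_exp ⟨by linarith, hyl⟩
    _ ≤ exp (-(f 0 * x ^ d + f (-x) * (y - x) ^ d)) := by gcongr; linarith
    _ = exp (-(f 0 * x ^ d)) * exp (-(f (-x) * (y - x) ^ d)) := by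
        rw [← exp_add]
        ring_nf

theorem mul_log_one_div_le (hf : ExtFixedPoint d lam f) (hd : 1 ≤ d) {x : ℝ} (hx : 0 ≤ x)
    (hxl : x ≤ lam) : f (-x) * log (1 / f (-x)) ≤ exp (-(f 0 * x ^ d)) := by
  have hmem : -x ∈ Icc (-lam) lam := ⟨by linarith, by linarith⟩
  have hw := hf.pos hmem
  have hfix := hf.eq_exp hmem
  simp only [neg_neg, neg_add_eq_sub] at hfix
  have hv := integral_rpow_sub_one_mul_le_div hd (exp_pos _).le hw hxl
    hf.antitone.intervalIntegrable fun y hy => hf.le_exp_mul_exp hd hx hy.1 hy.2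
  have hlog : log (1 / f (-x)) = d * ∫ y in x..lam, (y - x) ^ (d - 1) * f y := by
    rw [hfix, one_div, ← exp_neg, log_exp, neg_neg]
  rw [hlog]
  calc f (-x) * (d * ∫ y in x..lam, (y - x) ^ (d - 1) * f y)
      ≤ f (-x) * (exp (-(f 0 * x ^ d)) / f (-x)) := by gcongr
    _ = exp (-(f 0 * x ^ d)) := by field_simp

end ExtFixedPoint

/-- `Real.log (1 / 0) = 0` encodes the convention that the left-hand side vanishes at
`f_λ(-x) = 0`. -/
theorem fixedPoint_entropy_bound_neg_general (d lam : ℝ) (hd : 1 < d)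
    (flam : ℝ → ℝ) (hflam : ExtFixedPoint d lam flam) :
    ∀ x : ℝ, 0 ≤ x →
      flam (-x) * Real.log (1 / flam (-x)) ≤ Real.exp (-(x ^ d / Real.exp 1)) := by
  intro x hx
  rcases le_or_gt x lam with hxl | hxl
  · calc flam (-x) * log (1 / flam (-x)) ≤ exp (-(flam 0 * x ^ d)) :=
          hflam.mul_log_one_div_le hd.le hx hxl
      _ ≤ exp (-(x ^ d / exp 1)) := by
          gcongr
          rw [div_eq_mul_inv, ← exp_neg, mul_comm]
          gcongr
          exact hflam.exp_neg_one_le hd.le (hx.trans hxl)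
  · rw [hflam.2.2.1 (-x) (by linarith)]
    simp only [div_one, log_one, mul_zero]
    exact (exp_pos _).le

/-- for all `x ≥ 0`, `f_λ(-x) ln(1/f_λ(-x)) ≤ exp(-x^d / e)`.
(In Lean, `Real.log (1/u) = 0` when `u = 0` or `u = 1`, matching the convention.) -/
theorem fixedPoint_entropy_bound_neg (d lam : ℝ) (hd : 1 < d) (hlam : 0 < lam)
    (flam : ℝ → ℝ) (hflam : ExtFixedPoint d lam flam) :
    ∀ x : ℝ, 0 ≤ x →
      flam (-x) * Real.log (1 / flam (-x)) ≤ Real.exp (-(x ^ d / Real.exp 1)) :=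
  fixedPoint_entropy_bound_neg_general d lam hd flam hflam
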